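/- arXiv:2303.00076 — 2 statements merged into one kernel-verified Lean document; each statement's English description precedes it below -/
import Mathlib

section
/- Let d ≥ 1, let α, β ∈ ℤ^d with α ▹ 0 and β ▹ 0, and suppose (2q+1)·α = (2p+1)·β for nonnegative integers p, q with gcd(2p+1, 2q+1) = 1. Then 3·⟨𝒞(α·x), 𝒞(β·x)⟩ = 1/((2p+1)²·(2q+1)²) in L²([0,1]^d). -/
open MeasureTheory Filter Topology

/-- The 1-periodic piecewise linear "cosine-like" function:
`𝒞(x) = 4|x - 1/2| - 1` on `[0,1]`, extended by `𝒞(x) = 𝒞(x - ⌊x⌋)`. -/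
noncomputable def Cfun (x : ℝ) : ℝ := 4 * |Int.fract x - 1 / 2| - 1

/-- The 1-periodic piecewise linear "sine-like" function:
`𝒮(x) = |2 - 4|x - 1/4|| - 1` on `[0,1]`, extended by `𝒮(x) = 𝒮(x - ⌊x⌋)`. -/
noncomputable def Sfun (x : ℝ) : ℝ := abs (2 - 4 * |Int.fract x - 1 / 4|) - 1

/-- `α ▹ 0`: the first nonzero entry of the integer vector `α` is positive. -/
def PosLead {d : ℕ} (α : Fin d → ℤ) : Prop :=
  ∃ i : Fin d, 0 < α i ∧ ∀ j : Fin d, j < i → α j = 0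

/-!
Since `gcd(2p+1, 2q+1) = 1`, we can write `α = (2p+1)γ` and `β = (2q+1)γ` with `γ ≠ 0`, so the
integrand is `f (γ·x)` for the 1-periodic `f t = 𝒞((2p+1)t) 𝒞((2q+1)t)`; integrating first along a
coordinate where `γ` does not vanish shows that the cube integral equals `∫₀¹ f`.

For odd `m` the triangle wave satisfies the distribution relation `∑_{j<m} 𝒞(t + j/m) = 𝒞(mt)/m`.
Averaging `∫₀¹ 𝒞(mx) 𝒞(nx)` over the shifts `x ↦ x + j/m`, which fix `𝒞(mx)` and, when
`gcd(m, n) = 1`, permute the residues `nj mod m`, gives `∫₀¹ 𝒞(mx) 𝒞(nx) = m⁻² ∫₀¹ 𝒞(x) 𝒞(nx)`.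
Applying this twice and `∫₀¹ 𝒞² = 1/3` yields the value.
-/

open Finset

theorem IsCoprime.exists_eq_mul_of_mul_eq_mul {R : Type*} [CommRing R] [IsDomain R] {a b x y : R}
    (hab : IsCoprime a b) (ha : a ≠ 0) (h : b * x = a * y) : ∃ z, x = a * z ∧ y = b * z := by
  obtain ⟨z, rfl⟩ := hab.dvd_of_dvd_mul_left ⟨y, h⟩
  exact ⟨z, rfl, mul_left_cancel₀ ha (by linear_combination -h)⟩

namespace Function.Periodic

variable {f : ℝ → ℝ}

theorem intervalIntegral_comp_int_mul_add (hf : Periodic f 1)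
    (hf_int : ∀ a b, IntervalIntegrable f volume a b) {k : ℤ} (hk : k ≠ 0) (c : ℝ) :
    ∫ t in (0 : ℝ)..1, f (k * t + c) = ∫ t in (0 : ℝ)..1, f t := by
  have hk' : (k : ℝ) ≠ 0 := Int.cast_ne_zero.2 hk
  have h := hf.intervalIntegral_add_zsmul_eq k c hf_int
  rw [zsmul_one] at h
  rw [intervalIntegral.integral_comp_mul_add f hk', mul_zero, zero_add, mul_one, add_comm, h,
    hf.intervalIntegral_add_eq c 0, zero_add, zsmul_eq_mul, smul_eq_mul,
    inv_mul_cancel_left₀ hk']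

theorem add_nat_div_eq_add_mod_div (hf : Periodic f 1) (m a : ℕ) (s : ℝ) :
    f (s + a / m) = f (s + (a % m : ℕ) / m) := by
  rcases Nat.eq_zero_or_pos m with rfl | hm
  · simp
  conv_lhs => rw [← Nat.mod_add_div a m]
  have hm' : (m : ℝ) ≠ 0 := by positivity
  rw [Nat.cast_add, Nat.cast_mul, add_div, mul_div_cancel_left₀ _ hm', ← add_assoc,
    ← mul_one ((a / m : ℕ) : ℝ)]
  exact hf.nat_mul _ _

theorem sum_range_comp_add_mul_div (hf : Periodic f 1) {m n : ℕ} (hmn : n.Coprime m) (s : ℝ) :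
    ∑ j ∈ range m, f (s + n * j / m) = ∑ j ∈ range m, f (s + j / m) := by
  rcases Nat.eq_zero_or_pos m with rfl | hm
  · simp
  have hmaps : ∀ j ∈ range m, n * j % m ∈ range m := fun j _ => mem_range.2 (Nat.mod_lt _ hm)
  have hinj : Set.InjOn (fun j => n * j % m) (range m) := by
    intro a ha b hb hab
    have hab' : a ≡ b [MOD m] := Nat.ModEq.cancel_left_of_coprime hmn.symm hab
    rwa [Nat.ModEq, Nat.mod_eq_of_lt (mem_range.1 ha), Nat.mod_eq_of_lt (mem_range.1 hb)] at hab'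
  refine sum_nbij _ hmaps hinj (surjOn_of_injOn_of_card_le _ hmaps hinj le_rfl) fun j _ => ?_
  rw [← hf.add_nat_div_eq_add_mod_div, Nat.cast_mul]

theorem setIntegral_Icc_comp_sum_int_mul {d : ℕ}
    (hf : Periodic f 1) (hfc : Continuous f) {γ : Fin d → ℤ} (hγ : γ ≠ 0) :
    ∫ x in Set.Icc (0 : Fin d → ℝ) 1, f (∑ i, γ i * x i) = ∫ t in (0 : ℝ)..1, f t := by
  obtain ⟨i₀, hi₀⟩ := ne_iff.1 hγ
  cases d with
  | zero => exact i₀.elim0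
  | succ n =>
  set μ : Measure ℝ := volume.restrict (Set.Icc 0 1)
  have : IsProbabilityMeasure μ := ⟨by simp [μ]⟩
  rw [← Set.pi_univ_Icc, volume_pi, Measure.restrict_pi_pi]
  simp only [Pi.zero_apply, Pi.one_apply]
  rw [← (measurePreserving_piFinSuccAbove (fun _ => μ) i₀).symm.integral_comp']
  have hsplit (z : ℝ × (Fin n → ℝ)) :
      ∑ i, (γ i : ℝ) * (MeasurableEquiv.piFinSuccAbove (fun _ => ℝ) i₀).symm z i
        = γ i₀ * z.1 + ∑ j, (γ (i₀.succAbove j) : ℝ) * z.2 j := by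
    rw [Fin.sum_univ_succAbove _ i₀]
    simp [MeasurableEquiv.piFinSuccAbove_symm_apply, Fin.insertNthEquiv]
  simp only [hsplit]
  obtain ⟨C, hC⟩ := isBounded_iff_forall_norm_le.1 (hf.isBounded_of_continuous one_ne_zero hfc)
  have hint : Integrable (fun z : ℝ × (Fin n → ℝ) =>
      f (γ i₀ * z.1 + ∑ j, (γ (i₀.succAbove j) : ℝ) * z.2 j)) (μ.prod (Measure.pi fun _ => μ)) :=
    .of_bound (by fun_prop) C (.of_forall fun z => hC _ ⟨_, rfl⟩)
  rw [integral_prod_symm _ hint]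
  have hinner (c : ℝ) : ∫ t, f (γ i₀ * t + c) ∂μ = ∫ t in (0 : ℝ)..1, f t := by
    rw [integral_Icc_eq_integral_Ioc, ← intervalIntegral.integral_of_le zero_le_one,
      hf.intervalIntegral_comp_int_mul_add (fun _ _ => hfc.intervalIntegrable _ _) hi₀]
  simp [hinner]

end Function.Periodic

theorem sum_range_abs_add_sub (r : ℕ) {w : ℝ} (hw : |w| ≤ 1) :
    ∑ j ∈ range (2 * r + 1), |w + j - r| = |w| + r * (r + 1) := by
  obtain ⟨hw₁, hw₂⟩ := abs_le.1 hw
  induction r with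
  | zero => simp
  | succ r ih =>
    rw [show 2 * (r + 1) + 1 = 2 * r + 1 + 1 + 1 by ring, sum_range_succ, sum_range_succ']
    push_cast at ih ⊢
    simp only [show ∀ j : ℝ, w + (j + 1) - (r + 1) = w + j - r by intro j; ring, ih]
    rw [abs_of_nonpos (a := w + 0 - (r + 1)) (by linarith),
      abs_of_nonneg (a := w + (2 * r + 2) - (r + 1)) (by linarith)]
    ring

theorem Cfun_add_natCast (x : ℝ) (k : ℕ) : Cfun (x + k) = Cfun x := by
  simp [Cfun]

theorem Cfun_periodic : Function.Periodic Cfun 1 := fun x => by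
  simpa using Cfun_add_natCast x 1

theorem Cfun_natCast_mul_periodic (k : ℕ) : Function.Periodic (fun x => Cfun (k * x)) 1 :=
  fun x => by simp [mul_add, Cfun_add_natCast]

@[fun_prop]
theorem continuous_Cfun : Continuous Cfun :=
  ContinuousOn.comp_fract'' (f := fun y : ℝ => 4 * |y - 1 / 2| - 1) (by fun_prop) (by norm_num)

theorem Cfun_of_mem_Icc {x : ℝ} (hx : x ∈ Set.Icc 0 1) : Cfun x = 4 * |x - 1 / 2| - 1 := by
  rcases hx.2.lt_or_eq with hx₁ | rfl
  · rw [Cfun, Int.fract_eq_self.2 ⟨hx.1, hx₁⟩]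
  · norm_num [Cfun]

theorem sum_range_Cfun_add_div_of_mem_Ico (r : ℕ) {u : ℝ} (hu : u ∈ Set.Ico 0 1) :
    ∑ j ∈ range (2 * r + 1), Cfun ((u + j) / (2 * r + 1)) = Cfun u / (2 * r + 1) := by
  have hm : (0 : ℝ) < 2 * r + 1 := by positivity
  have hterm : ∀ j ∈ range (2 * r + 1),
      Cfun ((u + j) / (2 * r + 1)) = 4 * |u - 1 / 2 + j - r| / (2 * r + 1) - 1 := by
    intro j hj
    have hj' : (j : ℝ) + 1 ≤ 2 * r + 1 := by exact_mod_cast mem_range.1 hj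
    have hmem : (u + j) / (2 * r + 1) ∈ Set.Ico 0 1 :=
      ⟨div_nonneg (by linarith [hu.1, j.cast_nonneg (α := ℝ)]) hm.le,
        (div_lt_one hm).2 (by linarith [hu.2])⟩
    rw [Cfun_of_mem_Icc (Set.Ico_subset_Icc_self hmem),
      show (u + j) / (2 * r + 1) - 1 / 2 = (u - 1 / 2 + j - r) / (2 * r + 1) by field_simp; ring,
      abs_div, abs_of_pos hm, mul_div_assoc]
  have hw : |u - 1 / 2| ≤ 1 := abs_le.2 ⟨by linarith [hu.1], by linarith [hu.2]⟩
  rw [sum_congr rfl hterm, sum_sub_distrib, ← sum_div, ← mul_sum, sum_range_abs_add_sub r hw,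
    Cfun_of_mem_Icc (Set.Ico_subset_Icc_self hu), sum_const, card_range]
  field_simp
  ring

theorem sum_range_Cfun_add_div {m : ℕ} (hm : Odd m) (t : ℝ) :
    ∑ j ∈ range m, Cfun (t + j / m) = Cfun (m * t) / m := by
  obtain ⟨r, hr⟩ := hm
  have hm : (0 : ℝ) < m := by rw [hr]; positivity
  have hF : Function.Periodic (fun t => ∑ j ∈ range m, Cfun (t + j / m)) (1 / m) := by
    intro t
    have h := sum_range_succ' (fun j => Cfun (t + j / m)) m
    rw [sum_range_succ, Nat.cast_zero, zero_div, add_zero, div_self hm.ne', Cfun_periodic] at h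
    refine (sum_congr rfl fun j _ => congrArg Cfun ?_).trans (add_right_cancel h).symm
    push_cast
    ring
  have hG : Function.Periodic (fun t => Cfun (m * t) / m) (1 / m) := by
    intro t
    simp only [mul_add, mul_one_div_cancel hm.ne', Cfun_periodic _]
  -- both sides have period `1/m`, so it suffices to compare them on `[0, 1/m)`
  obtain ⟨y, ⟨hy₀, hy₁⟩, hty⟩ := (hF.sub hG).exists_mem_Ico₀ (by positivity) t
  rw [← sub_eq_zero]
  refine hty.trans (sub_eq_zero.2 ?_)
  have hu : (m : ℝ) * y ∈ Set.Ico 0 1 := ⟨by positivity, by rwa [lt_div_iff₀' hm] at hy₁⟩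
  have h := sum_range_Cfun_add_div_of_mem_Ico r hu
  rw [← hr, show 2 * (r : ℝ) + 1 = m by rw [hr]; push_cast; ring] at h
  refine Eq.trans (sum_congr rfl fun j _ => congrArg Cfun ?_) h
  field_simp

theorem integral_Cfun_mul_Cfun_of_odd_left {m n : ℕ} (hm : Odd m) (hmn : n.Coprime m) :
    ∫ x in (0 : ℝ)..1, Cfun (m * x) * Cfun (n * x)
      = (∫ x in (0 : ℝ)..1, Cfun x * Cfun (n * x)) / m ^ 2 := by
  have hm₀ : (m : ℝ) ≠ 0 := Nat.cast_ne_zero.2 hm.pos.ne'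
  have hΦ : Function.Periodic (fun x => Cfun (m * x) * Cfun (n * x)) 1 :=
    (Cfun_natCast_mul_periodic m).mul (Cfun_natCast_mul_periodic n)
  have hshift (j : ℕ) : ∫ x in (0 : ℝ)..1, Cfun (m * x) * Cfun (n * x)
      = ∫ x in (0 : ℝ)..1, Cfun (m * x) * Cfun (n * x + n * j / m) := by
    rw [← hΦ.intervalIntegral_comp_int_mul_add
      (fun _ _ => (by fun_prop : Continuous _).intervalIntegrable _ _) one_ne_zero (j / m)]
    refine intervalIntegral.integral_congr fun x _ => ?_
    simp only [Int.cast_one, one_mul, mul_add, mul_div_cancel₀ _ hm₀, Cfun_add_natCast,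
      mul_div_assoc]
  have hg : Function.Periodic (fun y => Cfun y * Cfun (n * y)) 1 :=
    Cfun_periodic.mul (Cfun_natCast_mul_periodic n)
  have hsum : (m : ℝ) * ∫ x in (0 : ℝ)..1, Cfun (m * x) * Cfun (n * x)
      = (∫ x in (0 : ℝ)..1, Cfun (m * x) * Cfun (n * (m * x))) / m := by
    calc (m : ℝ) * ∫ x in (0 : ℝ)..1, Cfun (m * x) * Cfun (n * x)
        = ∑ j ∈ range m, ∫ x in (0 : ℝ)..1, Cfun (m * x) * Cfun (n * x + n * j / m) := by
          rw [sum_congr rfl fun j _ => (hshift j).symm, sum_const, card_range, nsmul_eq_mul]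
      _ = ∫ x in (0 : ℝ)..1, Cfun (m * x) * ∑ j ∈ range m, Cfun (n * x + n * j / m) := by
          rw [← intervalIntegral.integral_finsetSum
            fun _ _ => (by fun_prop : Continuous _).intervalIntegrable _ _]
          simp only [mul_sum]
      _ = (∫ x in (0 : ℝ)..1, Cfun (m * x) * Cfun (n * (m * x))) / m := by
          rw [← intervalIntegral.integral_div]
          refine intervalIntegral.integral_congr fun x _ => ?_
          rw [Cfun_periodic.sum_range_comp_add_mul_div hmn, sum_range_Cfun_add_div hm,
            mul_div_assoc, mul_left_comm]
  have hsubst : ∫ x in (0 : ℝ)..1, Cfun (m * x) * Cfun (n * (m * x))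
      = ∫ x in (0 : ℝ)..1, Cfun x * Cfun (n * x) := by
    simpa using hg.intervalIntegral_comp_int_mul_add
      (fun _ _ => (by fun_prop : Continuous _).intervalIntegrable _ _)
      (Int.natCast_ne_zero.2 hm.pos.ne') 0
  rw [hsubst, eq_div_iff hm₀] at hsum
  rw [eq_div_iff (pow_ne_zero 2 hm₀)]
  linear_combination hsum

theorem integral_Cfun_mul_self : ∫ x in (0 : ℝ)..1, Cfun x * Cfun x = 1 / 3 := by
  have h₁ : ∀ x ∈ Set.uIcc (0 : ℝ) (1 / 2), Cfun x * Cfun x = (-4 * x + 1) ^ 2 := by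
    intro x hx
    rw [Set.uIcc_of_le (by norm_num)] at hx
    rw [Cfun_of_mem_Icc ⟨hx.1, by linarith [hx.2]⟩, abs_of_nonpos (by linarith [hx.2])]
    ring
  have h₂ : ∀ x ∈ Set.uIcc (1 / 2 : ℝ) 1, Cfun x * Cfun x = (4 * x + -3) ^ 2 := by
    intro x hx
    rw [Set.uIcc_of_le (by norm_num)] at hx
    rw [Cfun_of_mem_Icc ⟨by linarith [hx.1], hx.2⟩, abs_of_nonneg (by linarith [hx.1])]
    ring
  have hint (a b : ℝ) : IntervalIntegrable (fun x => Cfun x * Cfun x) volume a b :=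
    (by fun_prop : Continuous _).intervalIntegrable a b
  rw [← intervalIntegral.integral_add_adjacent_intervals (hint 0 (1 / 2)) (hint (1 / 2) 1),
    intervalIntegral.integral_congr h₁, intervalIntegral.integral_congr h₂,
    intervalIntegral.integral_comp_mul_add (fun y => y ^ 2) (by norm_num),
    intervalIntegral.integral_comp_mul_add (fun y => y ^ 2) (by norm_num)]
  norm_num [integral_pow]

theorem integral_Cfun_mul_Cfun_of_odd {m n : ℕ} (hm : Odd m) (hn : Odd n) (hmn : m.Coprime n) :
    ∫ x in (0 : ℝ)..1, Cfun (m * x) * Cfun (n * x) = 1 / (3 * m ^ 2 * n ^ 2) := by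
  have h := integral_Cfun_mul_Cfun_of_odd_left hn (Nat.coprime_one_left n)
  simp only [Nat.cast_one, one_mul] at h
  rw [integral_Cfun_mul_Cfun_of_odd_left hm hmn.symm,
    intervalIntegral.integral_congr (g := fun x => Cfun (n * x) * Cfun x) fun x _ => mul_comm _ _,
    h, integral_Cfun_mul_self]
  field_simp

theorem inner_CC_multivariate_general (d : ℕ) (α β : Fin d → ℤ)
    (hα : PosLead α) (p q : ℕ)
    (hpq : Nat.gcd (2 * p + 1) (2 * q + 1) = 1)
    (h : ∀ i, ((2 * q + 1 : ℕ) : ℤ) * α i = ((2 * p + 1 : ℕ) : ℤ) * β i) :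
    3 * ∫ x in Set.Icc (0 : Fin d → ℝ) 1,
        Cfun (∑ i, (α i : ℝ) * x i) * Cfun (∑ i, (β i : ℝ) * x i)
      = 1 / ((2 * (p : ℝ) + 1) ^ 2 * (2 * (q : ℝ) + 1) ^ 2) := by
  choose γ hαγ hβγ using fun i =>
    (Nat.isCoprime_iff_coprime.2 hpq).exists_eq_mul_of_mul_eq_mul (by positivity) (h i)
  have hγ : γ ≠ 0 := by
    rintro rfl
    obtain ⟨i, hi, -⟩ := hα
    simp [hαγ i] at hi
  have hf : Function.Periodic
      (fun t => Cfun ((2 * p + 1 : ℕ) * t) * Cfun ((2 * q + 1 : ℕ) * t)) 1 :=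
    (Cfun_natCast_mul_periodic _).mul (Cfun_natCast_mul_periodic _)
  have hsum (c : ℤ) (x : Fin d → ℝ) :
      ∑ i, ((c * γ i : ℤ) : ℝ) * x i = c * ∑ i, (γ i : ℝ) * x i := by
    simp only [Int.cast_mul, mul_sum, mul_assoc]
  simp only [hαγ, hβγ, hsum, Int.cast_natCast]
  rw [hf.setIntegral_Icc_comp_sum_int_mul (by fun_prop) hγ,
    integral_Cfun_mul_Cfun_of_odd (odd_two_mul_add_one p) (odd_two_mul_add_one q) hpq]
  push_cast
  field_simp

/-- If `(2q+1)·α = (2p+1)·β` with `gcd(2p+1, 2q+1) = 1`, then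
`3⟨𝒞(α·x), 𝒞(β·x)⟩ = 1/((2p+1)²(2q+1)²)` in `L²([0,1]^d)`. -/
theorem inner_CC_multivariate (d : ℕ) (hd : 1 ≤ d) (α β : Fin d → ℤ)
    (hα : PosLead α) (hβ : PosLead β) (p q : ℕ)
    (hpq : Nat.gcd (2 * p + 1) (2 * q + 1) = 1)
    (h : ∀ i, ((2 * q + 1 : ℕ) : ℤ) * α i = ((2 * p + 1 : ℕ) : ℤ) * β i) :
    3 * ∫ x in Set.Icc (0 : Fin d → ℝ) 1,
        Cfun (∑ i, (α i : ℝ) * x i) * Cfun (∑ i, (β i : ℝ) * x i)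
      = 1 / ((2 * (p : ℝ) + 1) ^ 2 * (2 * (q : ℝ) + 1) ^ 2) :=
  inner_CC_multivariate_general d α β hα p q hpq h
end

section
/- Let j ∈ ℕ. Then, restricted to [0,1], the function 𝒞_j belongs to Υ^{2, ⌈log₂ j⌉+1} and the function 𝒮_j belongs to Υ^{2, ⌈log₂ j⌉+2}; that is, there exist affine maps A^{(0)}: ℝ → ℝ², A^{(1)},…,A^{(L−1)}: ℝ² → ℝ², A^{(L)}: ℝ² → ℝ (with L = ⌈log₂ j⌉+1 for 𝒞_j and L = ⌈log₂ j⌉+2 for 𝒮_j) such that for all x ∈ [0,1] the function equals A^{(L)} ∘ ReLU ∘ A^{(L−1)} ∘ ⋯ ∘ ReLU ∘ A^{(0)} applied to x. Moreover, the networks can be chosen so that all entries of the weight matrices and of the bias vectors are bounded in absolute value by 8. -/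
/-- The REctified Linear Unit. -/
noncomputable def relu (t : ℝ) : ℝ := max 0 t

/-- `hiddenChain A b n v` applies `n` hidden layers (ReLU after an affine map
`w ↦ (A i) w + b i`, for `i = 0, …, n-1`) to the vector `v`. -/
noncomputable def hiddenChain {W : ℕ} (A : ℕ → Matrix (Fin W) (Fin W) ℝ)
    (b : ℕ → Fin W → ℝ) : ℕ → (Fin W → ℝ) → (Fin W → ℝ)
  | 0, v => v
  | n + 1, v => fun i => relu ((A n).mulVec (hiddenChain A b n v) i + b n i)

/-- The function `ℝ^d → ℝ` computed by a feed-forward ReLU network of width `W` and depth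
`L`, given by the affine maps `x ↦ A0 x + b0 : ℝ^d → ℝ^W`, `v ↦ (A l) v + b l : ℝ^W → ℝ^W`
for `l = 0, …, L-2`, and `v ↦ AL ⬝ v + bL : ℝ^W → ℝ`; i.e.
`A^{(L)} ∘ ReLU ∘ A^{(L-1)} ∘ ⋯ ∘ ReLU ∘ A^{(0)}`. -/
noncomputable def netFun (d W L : ℕ) (A0 : Matrix (Fin W) (Fin d) ℝ) (b0 : Fin W → ℝ)
    (A : ℕ → Matrix (Fin W) (Fin W) ℝ) (b : ℕ → Fin W → ℝ)
    (AL : Fin W → ℝ) (bL : ℝ) (x : Fin d → ℝ) : ℝ :=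
  (∑ i, AL i * hiddenChain A b (L - 1) (fun i => relu (A0.mulVec x i + b0 i)) i) + bL

/-- `MemUpsilonOn d W L M f D` says that `f : ℝ^d → ℝ` agrees on `D` with a function in
`Υ^{W,L}`, i.e. one computed by a feed-forward ReLU network of width `W` and depth `L ≥ 1`,
all of whose weight-matrix entries and bias-vector entries are bounded in absolute value
by `M`. -/
def MemUpsilonOn (d W L : ℕ) (M : ℝ) (f : (Fin d → ℝ) → ℝ) (D : Set (Fin d → ℝ)) : Prop :=
  1 ≤ L ∧
  ∃ (A0 : Matrix (Fin W) (Fin d) ℝ) (b0 : Fin W → ℝ)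
    (A : ℕ → Matrix (Fin W) (Fin W) ℝ) (b : ℕ → Fin W → ℝ)
    (AL : Fin W → ℝ) (bL : ℝ),
    (∀ i j, |A0 i j| ≤ M) ∧ (∀ i, |b0 i| ≤ M) ∧
    (∀ l, l < L - 1 → (∀ i j, |A l i j| ≤ M) ∧ (∀ i, |b l i| ≤ M)) ∧
    (∀ i, |AL i| ≤ M) ∧ |bL| ≤ M ∧
    ∀ x ∈ D, f x = netFun d W L A0 b0 A b AL bL x

section Aux

open Set Finset

/-- `relu t + relu (-t) = |t|`. -/
lemma relu_add_relu_neg (t : ℝ) : relu t + relu (-t) = |t| := by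
  rcases le_total 0 t with h | h
  · rw [relu, relu, max_eq_right h, max_eq_left (by linarith), abs_of_nonneg h]; ring
  · rw [relu, relu, max_eq_left h, max_eq_right (by linarith), abs_of_nonpos h]; ring

lemma relu_of_nonneg {t : ℝ} (h : 0 ≤ t) : relu t = t := max_eq_right h

lemma relu_of_nonpos {t : ℝ} (h : t ≤ 0) : relu t = 0 := max_eq_left h

/-- `Cfun` is 1-periodic. -/
lemma Cfun_int_add (n : ℤ) (t : ℝ) : Cfun ((n : ℝ) + t) = Cfun t := by
  simp [Cfun, Int.fract_intCast_add]

/-- `Cfun` is even. -/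
lemma Cfun_neg (t : ℝ) : Cfun (-t) = Cfun t := by
  unfold Cfun
  rcases eq_or_ne (Int.fract t) 0 with h | h
  · rw [Int.fract_neg_eq_zero.2 h, h]
  · rw [Int.fract_neg h]
    rw [show 1 - Int.fract t - 1/2 = -(Int.fract t - 1/2) by ring, abs_neg]

/-- `Sfun` is `Cfun` shifted by a quarter period. -/
lemma Sfun_eq_Cfun (t : ℝ) : Sfun t = Cfun (t - 1/4) := by
  have hf0 := Int.fract_nonneg t
  have hf1 := Int.fract_lt_one t
  have hsplit : t - 1/4 = (↑⌊t⌋ : ℝ) + (Int.fract t - 1/4) := by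
    have := Int.floor_add_fract t; linarith
  rw [Sfun, Cfun, hsplit, Int.fract_intCast_add]
  set f := Int.fract t with hfdef
  rcases lt_or_ge f (1/4) with h | h
  · have h2 : f - 1/4 = (f + 3/4) + ((-1 : ℤ) : ℝ) := by push_cast; ring
    have h3 : Int.fract (f - 1/4) = f + 3/4 := by
      rw [h2, Int.fract_add_intCast]
      exact Int.fract_eq_self.2 ⟨by linarith, by linarith⟩
    rw [h3]
    rw [abs_of_nonpos (by linarith : f - 1/4 ≤ 0),
      abs_of_nonneg (by linarith : (0:ℝ) ≤ 2 - 4 * -(f - 1/4)),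
      abs_of_nonneg (by linarith : (0:ℝ) ≤ f + 3/4 - 1/2)]
    ring
  · rw [Int.fract_eq_self.2 ⟨by linarith, by linarith⟩,
      abs_of_nonneg (by linarith : (0:ℝ) ≤ f - 1/4),
      show (2:ℝ) - 4 * (f - 1/4) = 4 * (3/4 - f) by ring,
      show f - 1/4 - 1/2 = -(3/4 - f) by ring, abs_neg, abs_mul,
      abs_of_nonneg (by norm_num : (0:ℝ) ≤ 4)]

/-- Shifting the layer indices of a hidden chain. -/
lemma hiddenChain_shift (A A' : ℕ → Matrix (Fin 2) (Fin 2) ℝ) (b b' : ℕ → Fin 2 → ℝ)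
    (hA : ∀ l, A' (l + 1) = A l) (hb : ∀ l, b' (l + 1) = b l) (v : Fin 2 → ℝ) :
    ∀ n, hiddenChain A' b' (n + 1) v =
      hiddenChain A b n (fun i => relu ((A' 0).mulVec v i + b' 0 i))
  | 0 => rfl
  | n + 1 => by
    show (fun i => relu ((A' (n + 1)).mulVec (hiddenChain A' b' (n + 1) v) i + b' (n + 1) i))
      = _
    rw [hiddenChain_shift A A' b b' hA hb v n, hA n, hb n]
    rfl

/-- A strengthened form of `MemUpsilonOn 1 2 L 8` for scalar functions, where the
first-layer weights and biases are bounded by `1`. -/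
def GoodNet (L : ℕ) (f : ℝ → ℝ) : Prop :=
  1 ≤ L ∧
  ∃ (A0 : Matrix (Fin 2) (Fin 1) ℝ) (b0 : Fin 2 → ℝ)
    (A : ℕ → Matrix (Fin 2) (Fin 2) ℝ) (b : ℕ → Fin 2 → ℝ)
    (AL : Fin 2 → ℝ) (bL : ℝ),
    (∀ i j, |A0 i j| ≤ 1) ∧ (∀ i, |b0 i| ≤ 1) ∧
    (∀ l, l < L - 1 → (∀ i j, |A l i j| ≤ 8) ∧ (∀ i, |b l i| ≤ 8)) ∧
    (∀ i, |AL i| ≤ 8) ∧ |bL| ≤ 8 ∧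
    ∀ x ∈ Set.Icc (0:ℝ) 1, f x = netFun 1 2 L A0 b0 A b AL bL (fun _ => x)

lemma GoodNet.memUpsilonOn {L : ℕ} {f : ℝ → ℝ} (hf : GoodNet L f) :
    MemUpsilonOn 1 2 L 8 (fun x => f (x 0)) (Set.Icc 0 1) := by
  obtain ⟨hL, A0, b0, A, b, AL, bL, hA0, hb0, hAb, hAL, hbL, heq⟩ := hf
  refine ⟨hL, A0, b0, A, b, AL, bL, fun i j => (hA0 i j).trans (by norm_num),
    fun i => (hb0 i).trans (by norm_num), hAb, hAL, hbL, ?_⟩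
  intro x hx
  have hx0 : x 0 ∈ Set.Icc (0:ℝ) 1 := ⟨hx.1 0, hx.2 0⟩
  have hxeq : (fun _ : Fin 1 => x 0) = x := funext fun i => by fin_cases i; rfl
  show f (x 0) = netFun 1 2 L A0 b0 A b AL bL x
  rw [heq (x 0) hx0, hxeq]

/-- Precomposing a good network with a map of the form
`x ↦ a 0 * relu (p 0 * x + q 0) + a 1 * relu (p 1 * x + q 1)` costs one layer. -/
lemma GoodNet.comp {L : ℕ} {f : ℝ → ℝ} (hf : GoodNet L f) (p q a : Fin 2 → ℝ)
    (hp : ∀ m, |p m| ≤ 1) (hq : ∀ m, |q m| ≤ 1) (ha : ∀ m, |a m| ≤ 8) (g : ℝ → ℝ)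
    (hmem : ∀ x ∈ Set.Icc (0:ℝ) 1,
      (∑ m, a m * relu (p m * x + q m)) ∈ Set.Icc (0:ℝ) 1)
    (heq : ∀ x ∈ Set.Icc (0:ℝ) 1, g x = f (∑ m, a m * relu (p m * x + q m))) :
    GoodNet (L + 1) g := by
  obtain ⟨hL, A0, b0, A, b, AL, bL, hA0, hb0, hAb, hAL, hbL, hfeq⟩ := hf
  refine ⟨by omega, (fun i _ => p i), q,
    (fun l => match l with
      | 0 => (fun i m => A0 i 0 * a m)
      | Nat.succ k => A k),
    (fun l => match l with
      | 0 => b0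
      | Nat.succ k => b k), AL, bL,
    fun i j => hp i, hq, ?_, hAL, hbL, ?_⟩
  · intro l hl
    cases l with
    | zero =>
      constructor
      · intro i m
        calc |A0 i 0 * a m| = |A0 i 0| * |a m| := abs_mul _ _
          _ ≤ 1 * 8 := mul_le_mul (hA0 i 0) (ha m) (abs_nonneg _) zero_le_one
          _ = 8 := by norm_num
      · exact fun i => (hb0 i).trans (by norm_num)
    | succ k => exact hAb k (by omega)
  · intro x hx
    set y := ∑ m, a m * relu (p m * x + q m) with hy
    have hy01 := hmem x hx
    rw [heq x hx, hfeq y hy01]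
    unfold netFun
    obtain ⟨L', rfl⟩ : ∃ L', L = L' + 1 := ⟨L - 1, by omega⟩
    have hinput : (fun i => relu (Matrix.mulVec
          (fun i m => A0 i 0 * a m : Matrix (Fin 2) (Fin 2) ℝ)
          (fun i => relu (Matrix.mulVec (fun i _ => p i : Matrix (Fin 2) (Fin 1) ℝ)
            (fun _ => x) i + q i)) i + b0 i))
        = (fun i => relu (A0.mulVec (fun _ => y) i + b0 i)) := by
      funext i
      have h1 : Matrix.mulVec (fun i m => A0 i 0 * a m : Matrix (Fin 2) (Fin 2) ℝ)
          (fun i => relu (Matrix.mulVec (fun i _ => p i : Matrix (Fin 2) (Fin 1) ℝ)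
            (fun _ => x) i + q i)) i = A0 i 0 * y := by
        simp only [Matrix.mulVec, dotProduct, Fin.sum_univ_one, hy]
        rw [Finset.mul_sum]
        exact Finset.sum_congr rfl fun m _ => by ring
      have h2 : A0.mulVec (fun _ => y) i = A0 i 0 * y := by
        simp only [Matrix.mulVec, dotProduct, Fin.sum_univ_one]
      rw [h1, h2]
    have hchain :
        hiddenChain
          (fun l => match l with
            | 0 => (fun i m => A0 i 0 * a m : Matrix (Fin 2) (Fin 2) ℝ)
            | Nat.succ k => A k)
          (fun l => match l with
            | 0 => b0
            | Nat.succ k => b k) (L' + 1)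
          (fun i => relu (Matrix.mulVec (fun i _ => p i : Matrix (Fin 2) (Fin 1) ℝ)
            (fun _ => x) i + q i))
        = hiddenChain A b L' (fun i => relu (A0.mulVec (fun _ => y) i + b0 i)) := by
      rw [hiddenChain_shift A _ b _ (fun l => rfl) (fun l => rfl), hinput]
    simp only [Nat.add_sub_cancel]
    rw [hchain]

/-- Base case: `Cfun` itself on `[0,1]` by a depth-1 network. -/
lemma goodNet_Cfun : GoodNet 1 Cfun := by
  refine ⟨le_refl 1, (fun i _ => 1), ![0, -(1/2)], fun _ => 0, fun _ => 0, ![-4, 8], 1,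
    ?_, ?_, ?_, ?_, by norm_num, ?_⟩
  · intro i j; norm_num
  · intro i; fin_cases i <;> simp [abs_le] <;> norm_num
  · intro l hl; omega
  · intro i; fin_cases i <;> simp [abs_le] <;> norm_num
  · intro x hx
    obtain ⟨hx0, hx1⟩ := hx
    have hnet : netFun 1 2 1 (fun i _ => 1) ![0, -(1/2)] (fun _ => 0) (fun _ => 0)
        ![-4, 8] 1 (fun _ => x) = -4 * relu (x + 0) + 8 * relu (x + -(1/2)) + 1 := by
      unfold netFun
      show (∑ i, _ * hiddenChain _ _ 0 _ i) + _ = _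
      rw [show hiddenChain (fun _ => (0 : Matrix (Fin 2) (Fin 2) ℝ)) (fun _ => 0) 0 = id
        from rfl]
      simp [Fin.sum_univ_two, Matrix.mulVec, dotProduct]
    rw [hnet]
    rcases lt_or_eq_of_le hx1 with h1 | h1
    · rw [Cfun, Int.fract_eq_self.2 ⟨hx0, h1⟩, relu_of_nonneg (by linarith)]
      rcases le_total x (1/2) with h | h
      · rw [relu_of_nonpos (by linarith), abs_of_nonpos (by linarith)]; ring
      · rw [relu_of_nonneg (by linarith), abs_of_nonneg (by linarith)]; ring
    · subst h1
      rw [Cfun, show Int.fract (1:ℝ) = 0 from Int.fract_one,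
        relu_of_nonneg (by norm_num), relu_of_nonneg (by norm_num),
        show (0:ℝ) - 1/2 = -(1/2) by ring, abs_neg,
        abs_of_nonneg (by norm_num : (0:ℝ) ≤ 1/2)]
      norm_num

/-- The folding step: `Cfun (j x) = Cfun (⌈j/2⌉ φ(x))` for a two-neuron fold `φ`. -/
lemma goodNet_C_step (j : ℕ) (hj : 2 ≤ j) {L : ℕ}
    (hG : GoodNet L (fun t => Cfun ((((j + 1) / 2 : ℕ) : ℝ) * t))) :
    GoodNet (L + 1) (fun t => Cfun ((j : ℝ) * t)) := by
  set j' : ℕ := (j + 1) / 2 with hj'def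
  have hjpos : (0:ℝ) < (j : ℝ) := by exact_mod_cast (by omega : 0 < j)
  have hj'pos : (0:ℝ) < (j' : ℝ) := by exact_mod_cast (by omega : 0 < j')
  have hjle : (j : ℝ) ≤ 2 * (j' : ℝ) := by exact_mod_cast (by omega : j ≤ 2 * j')
  have hj'le : (j' : ℝ) ≤ (j : ℝ) := by exact_mod_cast (by omega : j' ≤ j)
  set s : ℝ := (j : ℝ) / (j' : ℝ) with hsdef
  set c : ℝ := (j' : ℝ) / (j : ℝ) with hcdef
  have hj's : (j' : ℝ) * s = (j : ℝ) := by
    rw [hsdef, mul_comm, div_mul_cancel₀ _ (ne_of_gt hj'pos)]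
  have hsc : s * c = 1 := by
    rw [hsdef, hcdef, div_mul_div_comm, mul_comm ((j':ℝ)) ((j:ℝ))]
    exact div_self (by positivity)
  have hs0 : 0 < s := by positivity
  have hs2 : s ≤ 2 := by rw [hsdef, div_le_iff₀ hj'pos]; linarith
  have hs1 : 1 ≤ s := by rw [hsdef, le_div_iff₀ hj'pos]; linarith
  have hc0 : 0 < c := by positivity
  have hc1 : c ≤ 1 := by rw [hcdef, div_le_one hjpos]; linarith
  have hkey : ∀ x ∈ Set.Icc (0:ℝ) 1,
      (∑ m, (![s, -(2*s)] : Fin 2 → ℝ) m *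
        relu ((![1, 1] : Fin 2 → ℝ) m * x + (![0, -c] : Fin 2 → ℝ) m))
      = s * relu x - 2 * s * relu (x - c) := by
    intro x hx
    simp only [Fin.sum_univ_two, Matrix.cons_val_zero, Matrix.cons_val_one,
      Matrix.head_cons, one_mul, add_zero]
    rw [show x + -c = x - c by ring]
    ring
  have hphi : ∀ x ∈ Set.Icc (0:ℝ) 1,
      (s * relu x - 2 * s * relu (x - c)) ∈ Set.Icc (0:ℝ) 1 ∧
      Cfun ((j:ℝ) * x) = Cfun ((j':ℝ) * (s * relu x - 2 * s * relu (x - c))) := by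
    intro x hx
    obtain ⟨hx0, hx1⟩ := hx
    rw [relu_of_nonneg hx0]
    rcases le_total x c with h | h
    · rw [relu_of_nonpos (by linarith)]
      have hval : s * x - 2 * s * 0 = s * x := by ring
      have hmem : s * x ∈ Set.Icc (0:ℝ) 1 := by
        constructor
        · positivity
        · calc s * x ≤ s * c := by nlinarith
            _ = 1 := hsc
      have heq : (j':ℝ) * (s * x) = (j:ℝ) * x := by
        linear_combination x * hj's
      refine ⟨by rw [hval]; exact hmem, ?_⟩
      rw [hval, heq]
    · rw [relu_of_nonneg (by linarith)]
      have hval : s * x - 2 * s * (x - c) = 2 - s * x := by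
        have : s * c = 1 := hsc
        nlinarith [hsc]
      have hmem : (2 - s * x) ∈ Set.Icc (0:ℝ) 1 := by
        constructor
        · nlinarith
        · nlinarith [hsc]
      have heq : (j':ℝ) * (2 - s * x) = 2 * (j':ℝ) - (j:ℝ) * x := by
        linear_combination (-x) * hj's
      rw [hval, heq]
      refine ⟨hmem, ?_⟩
      have : 2 * (j':ℝ) - (j:ℝ) * x = ((2 * j' : ℤ) : ℝ) + -((j:ℝ) * x) := by
        push_cast; ring
      rw [this, Cfun_int_add, Cfun_neg]
  refine hG.comp ![1, 1] ![0, -c] ![s, -(2*s)] ?_ ?_ ?_ _ ?_ ?_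
  · intro m; fin_cases m <;> norm_num
  · intro m
    fin_cases m
    · norm_num
    · show |(-c)| ≤ 1
      rw [abs_neg, abs_of_nonneg hc0.le]; linarith
  · intro m
    fin_cases m
    · show |s| ≤ 8
      rw [abs_of_nonneg hs0.le]; linarith
    · show |(-(2*s))| ≤ 8
      rw [abs_neg, abs_of_nonneg (by linarith : (0:ℝ) ≤ 2 * s)]; linarith
  · intro x hx; rw [hkey x hx]; exact (hphi x hx).1
  · intro x hx; rw [hkey x hx]; exact (hphi x hx).2

/-- `Cfun (j ·)` on `[0,1]` by a depth-`⌈log₂ j⌉ + 1` network. -/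
lemma goodNet_C : ∀ j : ℕ, 1 ≤ j → GoodNet (Nat.clog 2 j + 1) (fun t => Cfun ((j : ℝ) * t)) := by
  intro j
  induction j using Nat.strong_induction_on with
  | _ j ih =>
    intro hj
    rcases lt_or_ge j 2 with h | h
    · have hj1 : j = 1 := by omega
      subst hj1
      simp only [Nat.clog_one_right, Nat.cast_one, one_mul]
      exact goodNet_Cfun
    · have hrec : Nat.clog 2 j = Nat.clog 2 ((j + 1) / 2) + 1 := by
        rw [Nat.clog_of_two_le one_lt_two h,
          show j + 2 - 1 = j + 1 from by omega]
      have hlt : (j + 1) / 2 < j := by omega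
      have h1' : 1 ≤ (j + 1) / 2 := by omega
      have hG := ih _ hlt h1'
      have := goodNet_C_step j h hG
      rw [hrec]
      exact this

/-- `Sfun (j ·)` on `[0,1]` by a depth-`⌈log₂ j⌉ + 2` network. -/
lemma goodNet_S (j : ℕ) (hj : 1 ≤ j) :
    GoodNet (Nat.clog 2 j + 2) (fun t => Sfun ((j : ℝ) * t)) := by
  have hG := goodNet_C j hj
  have hjpos : (0:ℝ) < (j : ℝ) := by exact_mod_cast hj
  have hj1 : (1:ℝ) ≤ (j : ℝ) := by exact_mod_cast hj
  set c : ℝ := 1 / (4 * (j : ℝ)) with hcdef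
  have hc0 : 0 < c := by positivity
  have hc14 : c ≤ 1/4 := by
    rw [hcdef, div_le_div_iff₀ (by positivity) (by norm_num)]
    linarith
  have hjc : (j : ℝ) * c = 1/4 := by rw [hcdef]; field_simp
  have hkey : ∀ x : ℝ,
      (∑ m, (![1, 1] : Fin 2 → ℝ) m *
        relu ((![1, -1] : Fin 2 → ℝ) m * x + (![-c, c] : Fin 2 → ℝ) m))
      = |x - c| := by
    intro x
    simp only [Fin.sum_univ_two, Matrix.cons_val_zero, Matrix.cons_val_one,
      Matrix.head_cons, one_mul]
    rw [show x + -c = x - c by ring, show (-1:ℝ) * x + c = -(x - c) by ring]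
    exact relu_add_relu_neg _
  have hfinal := hG.comp ![1, -1] ![-c, c] ![1, 1]
    (by intro m; fin_cases m <;> simp [abs_le] <;> norm_num)
    (by
      intro m
      fin_cases m
      · show |(-c)| ≤ 1
        rw [abs_neg, abs_of_nonneg hc0.le]; linarith
      · show |c| ≤ 1
        rw [abs_of_nonneg hc0.le]; linarith)
    (by intro m; fin_cases m <;> norm_num)
    (fun t => Sfun ((j : ℝ) * t))
    (by
      intro x hx
      rw [hkey x]
      constructor
      · exact abs_nonneg _
      · rw [abs_le]
        constructor <;> [linarith [hx.1]; linarith [hx.2]])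
    (by
      intro x hx
      rw [hkey x]
      show Sfun ((j:ℝ) * x) = Cfun ((j:ℝ) * |x - c|)
      rw [Sfun_eq_Cfun]
      have h1 : (j:ℝ) * x - 1/4 = (j:ℝ) * (x - c) := by rw [mul_sub, hjc]
      rw [h1]
      rcases le_total c x with h | h
      · rw [abs_of_nonneg (by linarith)]
      · rw [abs_of_nonpos (by linarith), mul_neg, Cfun_neg])
  have : Nat.clog 2 j + 2 = (Nat.clog 2 j + 1) + 1 := by ring
  rw [this]
  exact hfinal

end Aux

/-- For `j ∈ ℕ`, restricted to `[0,1]`, `𝒞_j ∈ Υ^{2, ⌈log₂ j⌉+1}` and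
`𝒮_j ∈ Υ^{2, ⌈log₂ j⌉+2}`, with all weights and biases bounded by 8. -/
theorem C_S_mem_upsilon (j : ℕ) (hj : 0 < j) :
    MemUpsilonOn 1 2 (Nat.clog 2 j + 1) 8 (fun x => Cfun ((j : ℝ) * x 0))
      (Set.Icc 0 1) ∧
    MemUpsilonOn 1 2 (Nat.clog 2 j + 2) 8 (fun x => Sfun ((j : ℝ) * x 0))
      (Set.Icc 0 1) := by
  constructor
  · exact (goodNet_C j hj).memUpsilonOn
  · exact (goodNet_S j hj).memUpsilonOn
end
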